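/- arXiv:2501.00631 — 3 statements merged into one kernel-verified Lean document; each statement's English description precedes it below -/
import Mathlib

section
/- Let σ > 0 and 0 < η < 1. Suppose f is analytic on the closed disc of radius σ centered at a, let h be a complex number with |h| = ησ, and let z satisfy |z - a| < |h|. Let M be the maximum of |f'| on the circle of radius σ centered at a, and let u = Re f. Then |f'(z)|σ ≤ (1/η)(|u(a+h)| + |u(a+ih)| + 2|u(a)|) + (10η/(2(1-η²)))σM. -/
open Complex Metric Set

private lemma seg_mem {p q a : ℂ} {r : ℝ} (hp : ‖p - a‖ ≤ r) (hq : ‖q - a‖ ≤ r)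
    {t : ℝ} (ht : t ∈ Set.Icc (0:ℝ) 1) : ‖p + (t:ℂ) * (q - p) - a‖ ≤ r := by
  obtain ⟨ht0, ht1⟩ := ht
  have key : p + (t:ℂ) * (q - p) - a = ((1 - t : ℝ) : ℂ) * (p - a) + (t:ℂ) * (q - a) := by
    push_cast; ring
  rw [key]
  calc ‖((1 - t : ℝ) : ℂ) * (p - a) + (t:ℂ) * (q - a)‖
      ≤ ‖((1 - t : ℝ) : ℂ) * (p - a)‖ + ‖(t:ℂ) * (q - a)‖ := norm_add_le _ _
    _ = (1 - t) * ‖p - a‖ + t * ‖q - a‖ := by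
        rw [norm_mul, norm_mul, Complex.norm_real, Complex.norm_real,
          Real.norm_of_nonneg (by linarith : (0:ℝ) ≤ 1 - t), Real.norm_of_nonneg ht0]
    _ ≤ (1 - t) * r + t * r := by
        have h1 : (0:ℝ) ≤ 1 - t := by linarith
        gcongr
    _ = r := by ring

private lemma ftc_seg {g : ℂ → ℂ} {V : Set ℂ} (hg : AnalyticOnNhd ℂ g V)
    {p q : ℂ} (hseg : ∀ t : ℝ, t ∈ Set.Icc (0:ℝ) 1 → p + (t:ℂ) * (q - p) ∈ V) :
    g q - g p = ∫ t in (0:ℝ)..1, deriv g (p + (t:ℂ) * (q - p)) * (q - p) := by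
  have huIcc : Set.uIcc (0:ℝ) 1 = Set.Icc 0 1 := Set.uIcc_of_le zero_le_one
  have hγc : Continuous fun t : ℝ => p + (t:ℂ) * (q - p) := by fun_prop
  have hγd : ∀ t : ℝ, HasDerivAt (fun t : ℝ => p + (t:ℂ) * (q - p)) (q - p) t := by
    intro t
    have h1 : HasDerivAt (fun t : ℝ => (t:ℂ)) 1 t := by
      simpa using (hasDerivAt_id t).ofReal_comp
    simpa using (h1.mul_const (q - p)).const_add p
  have hd : ∀ t ∈ Set.uIcc (0:ℝ) 1,
      HasDerivAt (fun t : ℝ => g (p + (t:ℂ) * (q - p)))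
        (deriv g (p + (t:ℂ) * (q - p)) * (q - p)) t := by
    intro t ht
    have hmem := hseg t (huIcc ▸ ht)
    exact ((hg _ hmem).differentiableAt.hasDerivAt).comp t (hγd t)
  have hcont : ContinuousOn (fun t : ℝ => deriv g (p + (t:ℂ) * (q - p)) * (q - p))
      (Set.uIcc (0:ℝ) 1) := by
    apply ContinuousOn.mul _ continuousOn_const
    exact (hg.deriv.continuousOn).comp hγc.continuousOn
      (fun t ht => hseg t (huIcc ▸ ht))
  have key := intervalIntegral.integral_eq_sub_of_hasDerivAt hd hcont.intervalIntegrable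
  have e1 : p + ((1:ℝ):ℂ) * (q - p) = q := by push_cast; ring
  have e0 : p + ((0:ℝ):ℂ) * (q - p) = p := by push_cast; ring
  rw [key]
  simp only [e1, e0]

private lemma normSq_mobius_key (c s : ℂ) :
    Complex.normSq (1 + (starRingEnd ℂ) c * s) - Complex.normSq (c + s) =
      (1 - Complex.normSq c) * (1 - Complex.normSq s) := by
  simp only [Complex.normSq_apply, Complex.add_re, Complex.add_im, Complex.mul_re,
    Complex.mul_im, Complex.one_re, Complex.one_im, Complex.conj_re, Complex.conj_im]
  ring

private lemma second_deriv_bound {g : ℂ → ℂ} {a : ℂ} {σ η M : ℝ} (hσ : 0 < σ)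
    (hη0 : 0 ≤ η) (hη1 : η < 1)
    (hg : DifferentiableOn ℂ g (Metric.ball a σ))
    (hgM : ∀ w ∈ Metric.ball a σ, ‖g w‖ ≤ M)
    {ζ : ℂ} (hζ : ζ ∈ Metric.closedBall a (η * σ)) :
    ‖deriv g ζ‖ * (σ * (1 - η ^ 2)) ≤ 5 / 4 * M := by
  set c : ℂ := (ζ - a) / σ with hcdef
  set k : ℂ := (starRingEnd ℂ) c with hkdef
  have hζa : ‖ζ - a‖ ≤ η * σ := by
    simpa [Complex.dist_eq] using Metric.mem_closedBall.1 hζ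
  have hc : ‖c‖ ≤ η := by
    rw [hcdef, norm_div, Complex.norm_real, Real.norm_of_nonneg hσ.le, div_le_iff₀ hσ]
    simpa using hζa
  have hc1 : ‖c‖ < 1 := lt_of_le_of_lt hc hη1
  have habsc : ‖c‖ ≤ η := by exact hc
  have hnsc : Complex.normSq c ≤ η ^ 2 := by
    rw [← Complex.sq_norm]
    have := mul_le_mul habsc habsc (norm_nonneg c) hη0
    nlinarith
  have hnc : Complex.normSq c < 1 := by nlinarith
  set φ : ℂ → ℂ := fun s => a + (σ:ℂ) * ((c + s) / (1 + k * s)) with hφdef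
  have hden : ∀ s : ℂ, ‖s‖ < 1 → 1 + k * s ≠ 0 := by
    intro s hs h0
    have h1 : ‖k * s‖ < 1 := by
      rw [norm_mul, hkdef, RCLike.norm_conj]
      nlinarith [norm_nonneg s, norm_nonneg c]
    have h2 : k * s = -1 := by linear_combination h0
    rw [h2] at h1; simp at h1
  have hmaps : ∀ s : ℂ, ‖s‖ < 1 → φ s ∈ Metric.ball a σ := by
    intro s hs
    have hkey := normSq_mobius_key c s
    have hns : Complex.normSq s < 1 := by
      rw [← Complex.sq_norm]; nlinarith [norm_nonneg s,
        (hs : ‖s‖ < 1)]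
    have hlt : Complex.normSq (c + s) < Complex.normSq (1 + k * s) := by
      rw [hkdef]; nlinarith
    have habs : ‖c + s‖ < ‖1 + k * s‖ := by
      rw [Complex.norm_def, Complex.norm_def]
      exact Real.sqrt_lt_sqrt (Complex.normSq_nonneg _) hlt
    rw [Metric.mem_ball, dist_eq_norm, hφdef]
    have he : a + (σ:ℂ) * ((c + s) / (1 + k * s)) - a = (σ:ℂ) * ((c + s) / (1 + k * s)) := by
      ring
    rw [he, norm_mul, norm_div, Complex.norm_real, Real.norm_of_nonneg hσ.le]
    have hpos : 0 < ‖1 + k * s‖ := norm_pos_iff.2 (hden s hs)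
    calc σ * (‖c + s‖ / ‖1 + k * s‖) < σ * 1 := by
          apply mul_lt_mul_of_pos_left _ hσ
          rw [div_lt_one hpos]; exact habs
      _ = σ := mul_one σ
  have hφ0 : φ 0 = ζ := by
    rw [hφdef]
    simp only [add_zero, mul_zero]
    rw [div_one, hcdef, mul_div_cancel₀]
    · ring
    · exact_mod_cast hσ.ne'
  have hφd : HasDerivAt φ ((σ:ℂ) * (1 - Complex.normSq c)) 0 := by
    have hN : HasDerivAt (fun s : ℂ => c + s) 1 0 := by
      simpa using (hasDerivAt_id (0:ℂ)).const_add c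
    have hD : HasDerivAt (fun s : ℂ => 1 + k * s) k 0 := by
      simpa using ((hasDerivAt_id (0:ℂ)).const_mul k).const_add 1
    have hD0 : (1:ℂ) + k * 0 ≠ 0 := by simpa using hden 0 (by simp)
    have h2 := ((hN.div hD hD0).const_mul (σ:ℂ)).const_add a
    have hck : c * k = (Complex.normSq c : ℂ) := by rw [hkdef]; exact Complex.mul_conj c
    have hval : (σ:ℂ) * ((1 * (1 + k * 0) - (c + 0) * k) / (1 + k * 0) ^ 2)
        = (σ:ℂ) * (1 - (Complex.normSq c : ℂ)) := by
      rw [← hck]; simp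
    rw [hval] at h2
    exact h2
  have hφ0mem : φ 0 ∈ Metric.ball a σ := hmaps 0 (by simp)
  have hζball : ζ ∈ Metric.ball a σ := hφ0 ▸ hφ0mem
  have hgζ : DifferentiableAt ℂ g ζ := hg.differentiableAt (Metric.isOpen_ball.mem_nhds hζball)
  have hG : HasDerivAt (g ∘ φ) (deriv g ζ * ((σ:ℂ) * (1 - Complex.normSq c))) 0 := by
    have hgd : HasDerivAt g (deriv g ζ) (φ 0) := by rw [hφ0]; exact hgζ.hasDerivAt
    exact hgd.comp 0 hφd
  have hGd : DiffContOnCl ℂ (g ∘ φ) (Metric.ball (0:ℂ) (4/5)) := by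
    apply DifferentiableOn.diffContOnCl
    rw [closure_ball (0:ℂ) (by norm_num : (4/5:ℝ) ≠ 0)]
    intro s hs
    have hs1 : ‖s‖ < 1 := by
      have := Metric.mem_closedBall.1 hs; rw [dist_zero_right] at this; linarith
    have hφs : DifferentiableAt ℂ φ s := by
      have h1 : DifferentiableAt ℂ (fun s : ℂ => c + s) s := by fun_prop
      have h2 : DifferentiableAt ℂ (fun s : ℂ => 1 + k * s) s := by fun_prop
      exact (differentiableAt_const a).add
        ((differentiableAt_const (σ:ℂ)).mul (h1.div h2 (hden s hs1)))
    exact ((hg.differentiableAt (Metric.isOpen_ball.mem_nhds (hmaps s hs1))).comp s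
      hφs).differentiableWithinAt
  have hsb : ∀ s ∈ Metric.sphere (0:ℂ) (4/5), ‖(g ∘ φ) s‖ ≤ M := by
    intro s hs
    have hns : ‖s‖ = 4/5 := by simpa [dist_zero_right] using hs
    exact hgM _ (hmaps s (by rw [hns]; norm_num))
  have hC := Complex.norm_deriv_le_of_forall_mem_sphere_norm_le
    (by norm_num : (0:ℝ) < 4/5) hGd hsb
  rw [hG.deriv] at hC
  have hnsc0 : 0 ≤ Complex.normSq c := Complex.normSq_nonneg c
  have hnorm : ‖deriv g ζ * ((σ:ℂ) * (1 - (Complex.normSq c : ℂ)))‖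
      = ‖deriv g ζ‖ * (σ * (1 - Complex.normSq c)) := by
    rw [norm_mul]
    congr 1
    have he : ((σ:ℂ) * (1 - (Complex.normSq c : ℂ))) = ((σ * (1 - Complex.normSq c) : ℝ) : ℂ) := by
      push_cast; ring
    rw [he, Complex.norm_real, Real.norm_of_nonneg
      (by nlinarith [mul_pos hσ (by linarith : (0:ℝ) < 1 - Complex.normSq c)])]
  rw [hnorm] at hC
  calc ‖deriv g ζ‖ * (σ * (1 - η ^ 2)) ≤ ‖deriv g ζ‖ * (σ * (1 - Complex.normSq c)) := by
        have hmono : σ * (1 - η ^ 2) ≤ σ * (1 - Complex.normSq c) := by nlinarith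
        exact mul_le_mul_of_nonneg_left hmono (norm_nonneg _)
    _ ≤ M / (4/5) := hC
    _ = 5 / 4 * M := by ring

/-- Hardy–Littlewood type pointwise bound for `|f'(z)|σ` in terms of values
of `u = Re f` and the maximum `M` of `|f'|` on the boundary circle. -/
theorem deriv_pointwise_bound (a : ℂ) (σ η : ℝ) (hσ : 0 < σ) (hη0 : 0 < η) (hη1 : η < 1)
    (f : ℂ → ℂ) (U : Set ℂ) (hUopen : IsOpen U) (hU : Metric.closedBall a σ ⊆ U)
    (hf : DifferentiableOn ℂ f U)
    (h z : ℂ) (hh : ‖h‖ = η * σ) (hz : ‖z - a‖ < ‖h‖)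
    (M : ℝ) (hM : ∀ w ∈ Metric.sphere a σ, ‖deriv f w‖ ≤ M) :
    ‖deriv f z‖ * σ ≤
      (1 / η) * (|(f (a + h)).re| + |(f (a + Complex.I * h)).re| + 2 * |(f a).re|) +
        (10 * η / (2 * (1 - η ^ 2))) * σ * M := by
  have hfa : AnalyticOnNhd ℂ f U := hf.analyticOnNhd hUopen
  set F : ℂ → ℂ := deriv f with hFdef
  have hFa : AnalyticOnNhd ℂ F U := hfa.deriv
  have hball : Metric.ball a σ ⊆ U := Metric.ball_subset_closedBall.trans hU
  have hcbsub : Metric.closedBall a (η * σ) ⊆ Metric.ball a σ := by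
    apply Metric.closedBall_subset_ball
    nlinarith
  -- maximum modulus: ‖F‖ ≤ M on the closed ball
  have hFM : ∀ w ∈ Metric.closedBall a σ, ‖F w‖ ≤ M := by
    intro w hw
    have hd : DiffContOnCl ℂ F (Metric.ball a σ) :=
      (hFa.differentiableOn).diffContOnCl_ball hU
    apply Complex.norm_le_of_forall_mem_frontier_norm_le isBounded_ball hd
    · intro x hx
      rw [frontier_ball a hσ.ne'] at hx
      exact hM x hx
    · rwa [closure_ball a hσ.ne']
  have hFMball : ∀ w ∈ Metric.ball a σ, ‖F w‖ ≤ M :=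
    fun w hw => hFM w (Metric.ball_subset_closedBall hw)
  have hM0 : 0 ≤ M := le_trans (norm_nonneg _) (hFMball a (Metric.mem_ball_self hσ))
  have hη2 : 0 < 1 - η ^ 2 := by nlinarith
  -- second derivative bound
  have hB : ∀ ζ ∈ Metric.closedBall a (η * σ),
      ‖deriv F ζ‖ * (σ * (1 - η ^ 2)) ≤ 5 / 4 * M := fun ζ hζ =>
    second_deriv_bound hσ hη0.le hη1 (hFa.differentiableOn.mono hball) hFMball hζ
  set B : ℝ := 5 / 4 * M / (σ * (1 - η ^ 2)) with hBdef
  have hσe : 0 < σ * (1 - η ^ 2) := by positivity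
  have hB' : ∀ ζ ∈ Metric.closedBall a (η * σ), ‖deriv F ζ‖ ≤ B := by
    intro ζ hζ
    rw [hBdef, le_div_iff₀ hσe]
    exact hB ζ hζ
  have hB0 : 0 ≤ B := by positivity
  have hzmem : z ∈ Metric.closedBall a (η * σ) := by
    rw [Metric.mem_closedBall, dist_eq_norm]
    linarith [hh ▸ hz]
  have hza : ‖z - a‖ ≤ η * σ := by
    rw [Metric.mem_closedBall, dist_eq_norm] at hzmem; exact hzmem
  -- Key1 : F w - F z is small for w in the small ball
  have key1 : ∀ w ∈ Metric.closedBall a (η * σ), ‖F w - F z‖ ≤ 2 * (η * σ) * B := by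
    intro w hw
    have hwa : ‖w - a‖ ≤ η * σ := by
      rw [Metric.mem_closedBall, dist_eq_norm] at hw; exact hw
    have hseg : ∀ t : ℝ, t ∈ Set.Icc (0:ℝ) 1 → z + (t:ℂ) * (w - z) ∈ U := by
      intro t ht
      exact hball (hcbsub (by
        rw [Metric.mem_closedBall, dist_eq_norm]
        exact seg_mem hza hwa ht))
    have := ftc_seg hFa hseg
    rw [this]
    have hbound : ∀ t ∈ Set.uIoc (0:ℝ) 1,
        ‖deriv F (z + (t:ℂ) * (w - z)) * (w - z)‖ ≤ B * (2 * (η * σ)) := by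
      intro t ht
      have ht' : t ∈ Set.Icc (0:ℝ) 1 := by
        have := Set.uIoc_of_le (zero_le_one' ℝ) ▸ ht
        exact ⟨le_of_lt this.1, this.2⟩
      rw [norm_mul]
      have h1 : ‖deriv F (z + (t:ℂ) * (w - z))‖ ≤ B := by
        apply hB'
        rw [Metric.mem_closedBall, dist_eq_norm]
        exact seg_mem hza hwa ht'
      have h2 : ‖w - z‖ ≤ 2 * (η * σ) := by
        calc ‖w - z‖ = ‖(w - a) + -(z - a)‖ := by ring_nf
          _ ≤ ‖w - a‖ + ‖z - a‖ := by
              refine (norm_add_le _ _).trans ?_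
              rw [norm_neg]
          _ ≤ η * σ + η * σ := add_le_add hwa hza
          _ = 2 * (η * σ) := by ring
      exact mul_le_mul h1 h2 (norm_nonneg _) hB0
    calc ‖∫ t in (0:ℝ)..1, deriv F (z + (t:ℂ) * (w - z)) * (w - z)‖
        ≤ B * (2 * (η * σ)) * |1 - 0| :=
          intervalIntegral.norm_integral_le_of_norm_le_const hbound
      _ = 2 * (η * σ) * B := by simp; ring
  -- Key2 : per direction
  have key2 : ∀ d : ℂ, ‖d‖ = η * σ →
      |(F z * d).re| ≤ |(f (a + d)).re| + |(f a).re| + 2 * (η * σ) * B * (η * σ) := by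
    intro d hd
    have hdseg : ∀ t : ℝ, t ∈ Set.Icc (0:ℝ) 1 → a + (t:ℂ) * (a + d - a) ∈ U := by
      intro t ht
      apply hball; apply hcbsub
      rw [Metric.mem_closedBall, dist_eq_norm]
      apply seg_mem (by simpa using (by positivity : (0:ℝ) ≤ η * σ)) _ ht
      simpa using hd.le
    have hftc := ftc_seg hfa hdseg
    have hmemt : ∀ t : ℝ, t ∈ Set.Icc (0:ℝ) 1 → a + (t:ℂ) * (a + d - a) ∈ Metric.closedBall a (η * σ) := by
      intro t ht
      rw [Metric.mem_closedBall, dist_eq_norm]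
      apply seg_mem (by simpa using (by positivity : (0:ℝ) ≤ η * σ)) _ ht
      simpa using hd.le
    -- the error integral
    have hE : f (a + d) - f a - F z * (a + d - a)
        = ∫ t in (0:ℝ)..1, (F (a + (t:ℂ) * (a + d - a)) - F z) * (a + d - a) := by
      have hint1 : IntervalIntegrable
          (fun t : ℝ => F (a + (t:ℂ) * (a + d - a)) * (a + d - a)) MeasureTheory.volume 0 1 := by
        apply ContinuousOn.intervalIntegrable
        apply ContinuousOn.mul _ continuousOn_const
        apply (hFa.continuousOn).comp (by fun_prop : Continuous fun t : ℝ => a + (t:ℂ) * (a + d - a)).continuousOn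
        intro t ht
        exact hdseg t (by rwa [Set.uIcc_of_le zero_le_one] at ht)
      have hint2 : IntervalIntegrable (fun _ : ℝ => F z * (a + d - a)) MeasureTheory.volume 0 1 :=
        intervalIntegrable_const
      rw [hftc]
      rw [show (fun t : ℝ => (F (a + (t:ℂ) * (a + d - a)) - F z) * (a + d - a))
          = fun t : ℝ => F (a + (t:ℂ) * (a + d - a)) * (a + d - a) - F z * (a + d - a) by
        funext t; ring]
      rw [intervalIntegral.integral_sub hint1 hint2]
      simp [hFdef]
    have hEb : ‖f (a + d) - f a - F z * (a + d - a)‖ ≤ 2 * (η * σ) * B * (η * σ) := by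
      rw [hE]
      have hbound : ∀ t ∈ Set.uIoc (0:ℝ) 1,
          ‖(F (a + (t:ℂ) * (a + d - a)) - F z) * (a + d - a)‖ ≤ 2 * (η * σ) * B * (η * σ) := by
        intro t ht
        have ht' : t ∈ Set.Icc (0:ℝ) 1 := by
          have := Set.uIoc_of_le (zero_le_one' ℝ) ▸ ht
          exact ⟨le_of_lt this.1, this.2⟩
        rw [norm_mul]
        have h1 := key1 _ (hmemt t ht')
        have h2 : ‖a + d - a‖ = η * σ := by simpa using hd
        rw [h2]
        apply mul_le_mul_of_nonneg_right h1 (by positivity)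
      calc ‖∫ t in (0:ℝ)..1, (F (a + (t:ℂ) * (a + d - a)) - F z) * (a + d - a)‖
          ≤ 2 * (η * σ) * B * (η * σ) * |1 - 0| :=
            intervalIntegral.norm_integral_le_of_norm_le_const hbound
        _ = 2 * (η * σ) * B * (η * σ) := by simp
    have hre : (F z * (a + d - a)).re = (f (a + d)).re - (f a).re
        - (f (a + d) - f a - F z * (a + d - a)).re := by
      simp [Complex.sub_re]
    have hre2 : |(f (a + d) - f a - F z * (a + d - a)).re|
        ≤ 2 * (η * σ) * B * (η * σ) :=
      le_trans (Complex.abs_re_le_norm _) (by exact hEb)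
    have : (a : ℂ) + d - a = d := by ring
    rw [this] at hre hre2
    calc |(F z * d).re| = |(f (a + d)).re - (f a).re - (f (a + d) - f a - F z * d).re| := by
          rw [hre]
      _ ≤ |(f (a + d)).re| + |(f a).re| + |(f (a + d) - f a - F z * d).re| := by
          apply (abs_sub _ _).trans
          gcongr
          exact abs_sub _ _
      _ ≤ |(f (a + d)).re| + |(f a).re| + 2 * (η * σ) * B * (η * σ) := by linarith
  -- assemble
  have hdh : ‖Complex.I * h‖ = η * σ := by rw [norm_mul, Complex.norm_I, one_mul]; exact hh
  have k1 := key2 h hh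
  have k2 := key2 (Complex.I * h) hdh
  have him : |(F z * (Complex.I * h)).re| = |(F z * h).im| := by
    have : F z * (Complex.I * h) = (F z * h) * Complex.I := by ring
    rw [this, Complex.mul_I_re, abs_neg]
  rw [him] at k2
  have habs : ‖F z * h‖ ≤ |(F z * h).re| + |(F z * h).im| := by
    exact Complex.norm_le_abs_re_add_abs_im _
  have hnm : ‖F z * h‖ = ‖F z‖ * (η * σ) := by rw [norm_mul, hh]
  have main : ‖F z‖ * (η * σ) ≤ |(f (a + h)).re| + |(f (a + Complex.I * h)).re|
      + 2 * |(f a).re| + 4 * (η * σ) * B * (η * σ) := by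
    rw [← hnm]
    calc ‖F z * h‖ ≤ |(F z * h).re| + |(F z * h).im| := habs
      _ ≤ _ := by linarith
  -- final arithmetic
  have hBval : 4 * (η * σ) * B * (η * σ) = η * ((10 * η / (2 * (1 - η ^ 2))) * σ * M) := by
    rw [hBdef]
    field_simp
    ring
  rw [hBval] at main
  have hfinal : ‖F z‖ * σ * η ≤ ((1 / η) * (|(f (a + h)).re| + |(f (a + Complex.I * h)).re|
      + 2 * |(f a).re|) + (10 * η / (2 * (1 - η ^ 2))) * σ * M) * η := by
    have : ((1 / η) * (|(f (a + h)).re| + |(f (a + Complex.I * h)).re| + 2 * |(f a).re|)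
        + (10 * η / (2 * (1 - η ^ 2))) * σ * M) * η
        = (|(f (a + h)).re| + |(f (a + Complex.I * h)).re| + 2 * |(f a).re|)
          + η * ((10 * η / (2 * (1 - η ^ 2))) * σ * M) := by
      field_simp
    rw [this]
    calc ‖F z‖ * σ * η = ‖F z‖ * (η * σ) := by ring
      _ ≤ _ := main
  exact le_of_mul_le_mul_right hfinal hη0
end

section
/- Let (b_k), (d_k) be nonnegative sequences with b_{k+1} ≤ b_k + d_{k+1}, and let B_k, D_k be their running maxima. Let λ > 0, α > 1, γ > 0. Suppose m is the least index with B_m ≥ λ (i.e., B_j < λ for j < m), and suppose n ≥ m satisfies B_n ≥ αλ and D_n ≤ γλ. Then n - m ≥ (α - 1)/γ - 1. -/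
open scoped NNReal

/-- good-lambda separation on the index: if `m` is the least index with
`B_m ≥ λ`, and `n ≥ m` satisfies `B_n ≥ αλ` and `D_n ≤ γλ`, then
`n - m ≥ (α - 1)/γ - 1`. -/
theorem runningMax_good_lambda_index (b d : ℕ → ℝ≥0)
    (hrec : ∀ k, b (k + 1) ≤ b k + d (k + 1)) (h0 : b 0 ≤ d 0)
    (B D : ℕ → ℝ≥0)
    (hB : ∀ k, B k = (Finset.range (k + 1)).sup b)
    (hD : ∀ k, D k = (Finset.range (k + 1)).sup d)
    (lam alpha gamma : ℝ≥0) (hlam : 0 < lam) (halpha : 1 < alpha) (hgamma : 0 < gamma)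
    (m n : ℕ) (hm : lam ≤ B m) (hm' : ∀ j < m, B j < lam) (hmn : m ≤ n)
    (hBn : alpha * lam ≤ B n) (hDn : D n ≤ gamma * lam) :
    ((alpha : ℝ) - 1) / (gamma : ℝ) - 1 ≤ (n : ℝ) - (m : ℝ) := by
  have hdn : ∀ j ≤ n, d j ≤ D n := fun j hj => by
    rw [hD n]; exact Finset.le_sup (Finset.mem_range.mpr (Nat.lt_succ_of_le hj))
  have hbB : ∀ j, b j ≤ B j := fun j => by
    rw [hB j]; exact Finset.le_sup (Finset.mem_range.mpr j.lt_succ_self)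
  have key : ∀ k, m ≤ k → k ≤ n → b k ≤ lam + (k + 1 - m : ℕ) * D n := by
    intro k hk hkn
    induction k with
    | zero =>
      have hm0 : m = 0 := Nat.le_zero.mp hk
      subst hm0
      simpa using le_trans (le_trans h0 (hdn 0 (Nat.zero_le n)))
        (le_add_self : (D n : ℝ≥0) ≤ lam + D n)
    | succ k ih =>
      rcases Nat.lt_or_ge m (k + 1) with h | h
      · have hk' : m ≤ k := Nat.lt_succ_iff.mp h
        have heq : k + 1 + 1 - m = (k + 1 - m) + 1 := by omega
        calc b (k + 1) ≤ b k + d (k + 1) := hrec k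
          _ ≤ (lam + (k + 1 - m : ℕ) * D n) + D n :=
            add_le_add (ih hk' (le_trans (Nat.le_succ k) hkn)) (hdn _ hkn)
          _ = lam + (k + 1 + 1 - m : ℕ) * D n := by rw [heq]; push_cast; ring
      · have hkm : k < m := Nat.lt_of_lt_of_le k.lt_succ_self h
        have heq : k + 1 + 1 - m = 1 := by omega
        calc b (k + 1) ≤ b k + d (k + 1) := hrec k
          _ ≤ B k + D n := add_le_add (hbB k) (hdn _ hkn)
          _ ≤ lam + (k + 1 + 1 - m : ℕ) * D n := by
              rw [heq]
              simpa using add_le_add (le_of_lt (hm' k hkm)) (le_refl (D n))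
  have hBle : B n ≤ lam + (n + 1 - m : ℕ) * D n := by
    rw [hB n]
    apply Finset.sup_le
    intro j hj
    have hjn : j ≤ n := Nat.lt_succ_iff.mp (Finset.mem_range.mp hj)
    rcases Nat.lt_or_ge j m with h | h
    · exact le_trans (le_trans (hbB j) (le_of_lt (hm' j h))) le_self_add
    · refine le_trans (key j h hjn) (add_le_add_right ?_ lam)
      exact mul_le_mul_left (by exact_mod_cast Nat.sub_le_sub_right (by omega) m) _
  have hmain : alpha * lam ≤ (1 + (n + 1 - m : ℕ) * gamma) * lam := by
    calc alpha * lam ≤ B n := hBn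
      _ ≤ lam + (n + 1 - m : ℕ) * D n := hBle
      _ ≤ lam + (n + 1 - m : ℕ) * (gamma * lam) := by
          exact add_le_add_right (mul_le_mul_right hDn _) lam
      _ = (1 + (n + 1 - m : ℕ) * gamma) * lam := by ring
  have hcancel : alpha ≤ 1 + (n + 1 - m : ℕ) * gamma :=
    le_of_mul_le_mul_right hmain hlam
  have hR : (alpha : ℝ) ≤ 1 + ((n : ℝ) - m + 1) * gamma := by
    have hcast : ((n + 1 - m : ℕ) : ℝ) = (n : ℝ) - m + 1 := by
      rw [Nat.cast_sub (by omega : m ≤ n + 1)]; push_cast; ring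
    have := (NNReal.coe_le_coe).mpr hcancel
    rw [NNReal.coe_add, NNReal.coe_mul, NNReal.coe_one, NNReal.coe_natCast] at this
    rw [hcast] at this
    linarith
  have hg : (0 : ℝ) < gamma := hgamma
  rw [sub_le_iff_le_add, div_le_iff₀ hg]
  nlinarith
end

section
/- Let μ be a finite positive measure on the unit disc such that for every dyadic Carleson square C, μ(T(C)) ≥ τ·μ(C) where T(C) is the top half of C and τ > 0. Let D and d be nonnegative functions on the disc, constant on top halves of dyadic Carleson squares, with D the 'ancestral maximum' of d (D on the top half of C equals the max of d over the top halves of C and all its ancestors). Then for every λ > 0, τ·μ{z : D(z) ≥ λ} ≤ μ{z : d(z) ≥ λ}. -/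
open MeasureTheory
open scoped NNReal ENNReal

/-- The dyadic Carleson square at level `n` with angular index `k` (`k < 2^n`):
`1 - 2^{-n} ≤ |z| < 1` and the argument lies in the dyadic arc
`[2πk/2^n, 2π(k+1)/2^n)`. -/
def carlesonSq (n k : ℕ) : Set ℂ :=
  {z : ℂ | 1 - (2:ℝ) ^ (-(n:ℤ)) ≤ ‖z‖ ∧ ‖z‖ < 1 ∧
    ∃ θ : ℝ, z = (‖z‖ : ℂ) * Complex.exp ((θ : ℂ) * Complex.I) ∧
      2 * Real.pi * k / 2 ^ n ≤ θ ∧ θ < 2 * Real.pi * (k + 1) / 2 ^ n}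

/-- The top half of the dyadic Carleson square: the part with
`1 - 2^{-n} ≤ |z| < 1 - 2^{-n-1}`. -/
def carlesonTop (n k : ℕ) : Set ℂ :=
  {z ∈ carlesonSq n k | ‖z‖ < 1 - (2:ℝ) ^ (-(n:ℤ) - 1)}

/-! Stopping time: inside the disc, `{D ≥ λ}` is covered by the squares `C` at which `d ≥ λ`
on the top half while `d < λ` on the top halves of all strict ancestors. These squares are
pairwise disjoint, so
`τ μ(⋃ C) ≤ ∑ τ μ(C) ≤ ∑ μ(T(C)) = μ(⋃ T(C)) ≤ μ{d ≥ λ}`. -/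

open Set Complex
open scoped Real

noncomputable def argIco (z : ℂ) : ℝ :=
  toIcoMod Real.two_pi_pos 0 (arg z)

lemma argIco_mem_Ico (z : ℂ) : argIco z ∈ Ico 0 (2 * π) := by
  unfold argIco
  simpa only [zero_add] using toIcoMod_mem_Ico Real.two_pi_pos 0 (arg z)

lemma measurable_argIco : Measurable argIco := by
  unfold argIco
  simp only [toIcoMod_eq_fract_mul]
  exact (measurable_fract.comp (measurable_arg.div_const _)).mul_const _

lemma norm_mul_exp_argIco_mul_I (z : ℂ) : (‖z‖ : ℂ) * exp (argIco z * I) = z := by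
  rw [argIco, toIcoMod, ofReal_sub, ofReal_zsmul, ofReal_mul, ofReal_ofNat,
    exp_mul_I_periodic.sub_zsmul_eq, norm_mul_exp_arg_mul_I]

lemma argIco_ofReal_mul_exp_mul_I {r t : ℝ} (hr : 0 < r) (ht : t ∈ Ico 0 (2 * π)) :
    argIco (r * exp (t * I)) = t := by
  rw [argIco, arg_real_mul _ hr, arg_exp_mul_I, toIcoMod_toIocMod, toIcoMod_eq_self]
  simpa using ht

lemma Nat.floor_div_eq_iff {x c : ℝ} (hx : 0 ≤ x) (hc : 0 < c) {k : ℕ} :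
    ⌊x / c⌋₊ = k ↔ c * k ≤ x ∧ x < c * (k + 1) := by
  rw [Nat.floor_eq_iff (div_nonneg hx hc.le), le_div_iff₀ hc, div_lt_iff₀ hc, mul_comm c,
    mul_comm c]

noncomputable def angularIndex (n : ℕ) (z : ℂ) : ℕ :=
  ⌊argIco z / (2 * π / 2 ^ n)⌋₊

lemma angularIndex_lt_two_pow (n : ℕ) (z : ℂ) : angularIndex n z < 2 ^ n := by
  have h := argIco_mem_Ico z
  rw [angularIndex, Nat.floor_lt (div_nonneg h.1 (by positivity)), div_div_eq_mul_div,
    div_lt_iff₀ Real.two_pi_pos]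
  have := mul_lt_mul_of_pos_right h.2 (by positivity : (0:ℝ) < 2 ^ n)
  push_cast
  linarith

lemma measurable_angularIndex (n : ℕ) : Measurable (angularIndex n) :=
  (measurable_argIco.div_const _).nat_floor

lemma angularIndex_eq_iff {n k : ℕ} {z : ℂ} :
    angularIndex n z = k ↔
      2 * π * k / 2 ^ n ≤ argIco z ∧ argIco z < 2 * π * (k + 1) / 2 ^ n := by
  rw [angularIndex, Nat.floor_div_eq_iff (argIco_mem_Ico z).1 (by positivity)]
  simp only [mul_div_right_comm (2 * π)]

lemma mem_carlesonSq_iff {n k : ℕ} (hk : k < 2 ^ n) {z : ℂ} :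
    z ∈ carlesonSq n k ↔
      1 - (2:ℝ) ^ (-(n:ℤ)) ≤ ‖z‖ ∧ ‖z‖ < 1 ∧ angularIndex n z = k := by
  refine ⟨fun ⟨hlo, hhi, θ, hθ, hθk⟩ => ⟨hlo, hhi, ?_⟩,
    fun ⟨hlo, hhi, hz⟩ => ⟨hlo, hhi, argIco z, (norm_mul_exp_argIco_mul_I z).symm,
      angularIndex_eq_iff.1 hz⟩⟩
  rcases eq_or_ne z 0 with rfl | hz
  · -- `0` lies only in the level-0 square, whose single index is `0`.
    have hn : n = 0 := by
      by_contra hn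
      rw [norm_zero, zpow_neg, zpow_natCast] at hlo
      linarith [inv_lt_one_of_one_lt₀ (one_lt_pow₀ (one_lt_two : (1:ℝ) < 2) hn)]
    subst hn
    have := angularIndex_lt_two_pow 0 0
    omega
  · have hθ_mem : θ ∈ Ico 0 (2 * π) := by
      have hk' : (k : ℝ) + 1 ≤ 2 ^ n := by exact_mod_cast hk
      constructor
      · exact le_trans (by positivity) hθk.1
      · refine hθk.2.trans_le ?_
        rw [div_le_iff₀ (by positivity)]
        gcongr
    rw [angularIndex_eq_iff, (congrArg argIco hθ).trans
      (argIco_ofReal_mul_exp_mul_I (norm_pos_iff.2 hz) hθ_mem)]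
    exact hθk

lemma measurableSet_carlesonSq {n k : ℕ} (hk : k < 2 ^ n) : MeasurableSet (carlesonSq n k) := by
  have : carlesonSq n k =
      {z | 1 - (2:ℝ) ^ (-(n:ℤ)) ≤ ‖z‖} ∩ {z | ‖z‖ < 1} ∩ angularIndex n ⁻¹' {k} := by
    ext z
    simp only [mem_carlesonSq_iff hk, mem_inter_iff, mem_ofPred_eq, mem_preimage,
      mem_singleton_iff, and_assoc]
  rw [this]
  exact ((measurableSet_le measurable_const measurable_norm).inter
    (measurableSet_lt measurable_norm measurable_const)).inter
    (measurable_angularIndex n (measurableSet_singleton k))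

lemma measurableSet_carlesonTop {n k : ℕ} (hk : k < 2 ^ n) : MeasurableSet (carlesonTop n k) :=
  (measurableSet_carlesonSq hk).inter (measurableSet_lt measurable_norm measurable_const)

lemma Nat.div_two_pow_sub_lt {n m k : ℕ} (hk : k < 2 ^ n) (hm : m ≤ n) :
    k / 2 ^ (n - m) < 2 ^ m := by
  rwa [Nat.div_lt_iff_lt_mul (by positivity), ← pow_add, Nat.add_sub_cancel' hm]

lemma carlesonSq_subset_ancestor {n m k : ℕ} (hm : m ≤ n) :
    carlesonSq n k ⊆ carlesonSq m (k / 2 ^ (n - m)) := by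
  rintro z ⟨hlo, hhi, θ, hθ, hθlo, hθhi⟩
  set q := k / 2 ^ (n - m)
  have hpow : (2:ℝ) ^ n = 2 ^ m * 2 ^ (n - m) := by rw [← pow_add, Nat.add_sub_cancel' hm]
  have hqk : (q : ℝ) * 2 ^ (n - m) ≤ k := by exact_mod_cast Nat.div_mul_le_self k (2 ^ (n - m))
  have hkq : (k : ℝ) + 1 ≤ (q + 1) * 2 ^ (n - m) := by
    exact_mod_cast (Nat.lt_div_mul_add (by positivity : 0 < 2 ^ (n - m))).trans_le
      (by rw [add_mul, one_mul])
  refine ⟨?_, hhi, θ, hθ, ?_, ?_⟩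
  · have : (2:ℝ) ^ (-(n:ℤ)) ≤ 2 ^ (-(m:ℤ)) := zpow_le_zpow_right₀ one_le_two (by omega)
    linarith
  · calc 2 * π * q / 2 ^ m = 2 * π * (q * 2 ^ (n - m)) / 2 ^ n := by
          rw [hpow]; field_simp
      _ ≤ 2 * π * k / 2 ^ n := by gcongr
      _ ≤ θ := hθlo
  · calc θ < 2 * π * (k + 1) / 2 ^ n := hθhi
      _ ≤ 2 * π * ((q + 1) * 2 ^ (n - m)) / 2 ^ n := by gcongr
      _ = 2 * π * (q + 1) / 2 ^ m := by rw [hpow]; field_simp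

lemma disjoint_carlesonSq {n n' k k' : ℕ} (hk : k < 2 ^ n) (hk' : k' < 2 ^ n') (hn : n ≤ n')
    (hne : k' / 2 ^ (n' - n) ≠ k) : Disjoint (carlesonSq n k) (carlesonSq n' k') := by
  refine disjoint_left.2 fun z hz hz' => hne ?_
  have hanc := carlesonSq_subset_ancestor hn hz'
  rw [mem_carlesonSq_iff hk] at hz
  rw [mem_carlesonSq_iff (Nat.div_two_pow_sub_lt hk' hn)] at hanc
  exact hanc.2.2.symm.trans hz.2.2

lemma exists_mem_carlesonTop {z : ℂ} (hz : ‖z‖ < 1) :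
    ∃ n, z ∈ carlesonTop n (angularIndex n z) := by
  have hpos : 0 < 1 - ‖z‖ := by linarith
  obtain ⟨n, hn, hn'⟩ := exists_nat_pow_near ((one_le_inv₀ hpos).2 (by linarith [norm_nonneg z]))
    one_lt_two
  refine ⟨n, (mem_carlesonSq_iff (angularIndex_lt_two_pow n z)).2 ⟨?_, hz, rfl⟩, ?_⟩
  · rw [zpow_neg, zpow_natCast]
    linarith [(le_inv_comm₀ (by positivity) hpos).1 hn]
  · rw [show -(n:ℤ) - 1 = -((n + 1 : ℕ) : ℤ) by push_cast; ring, zpow_neg, zpow_natCast]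
    linarith [(inv_lt_comm₀ hpos (by positivity)).1 hn']

section StoppingTime

variable {β : Type*} [LinearOrder β]

/-- The first nodes, along each branch from the root of the dyadic tree, at which
`dnode` reaches `lam`. -/
def stoppingNodes (dnode : ℕ → ℕ → β) (lam : β) : Set (ℕ × ℕ) :=
  {p | p.2 < 2 ^ p.1 ∧ lam ≤ dnode p.1 p.2 ∧ ∀ m < p.1, dnode m (p.2 / 2 ^ (p.1 - m)) < lam}

variable {dnode : ℕ → ℕ → β} {lam : β}

lemma eq_of_mem_stoppingNodes {p q : ℕ × ℕ} (hp : p ∈ stoppingNodes dnode lam)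
    (hq : q ∈ stoppingNodes dnode lam) (hle : p.1 ≤ q.1) (h : q.2 / 2 ^ (q.1 - p.1) = p.2) :
    p = q := by
  obtain ⟨n, k⟩ := p
  obtain ⟨n', k'⟩ := q
  rcases hle.eq_or_lt with hn | hn
  · simp_all
  · exact absurd (h ▸ hp.2.1) (hq.2.2 n hn).not_ge

lemma pairwiseDisjoint_carlesonSq_stoppingNodes :
    (stoppingNodes dnode lam).PairwiseDisjoint fun p => carlesonSq p.1 p.2 := by
  have key : ∀ p ∈ stoppingNodes dnode lam, ∀ q ∈ stoppingNodes dnode lam, p.1 ≤ q.1 → p ≠ q →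
      Disjoint (carlesonSq p.1 p.2) (carlesonSq q.1 q.2) := fun p hp q hq hle hne =>
    disjoint_carlesonSq hp.1 hq.1 hle fun h => hne (eq_of_mem_stoppingNodes hp hq hle h)
  intro p hp q hq hne
  rcases le_total p.1 q.1 with h | h
  · exact key p hp q hq h hne
  · exact (key q hq p hp h hne.symm).symm

variable [OrderBot β]

lemma exists_ancestor_mem_stoppingNodes {n k : ℕ} (hk : k < 2 ^ n)
    (h : lam ≤ (Finset.range (n + 1)).sup fun m => dnode m (k / 2 ^ (n - m))) :
    ∃ m ≤ n, (m, k / 2 ^ (n - m)) ∈ stoppingNodes dnode lam := by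
  classical
  have hex : ∃ m, m ≤ n ∧ lam ≤ dnode m (k / 2 ^ (n - m)) := by
    obtain ⟨m, hm, hsup⟩ := Finset.exists_mem_eq_sup _ Finset.nonempty_range_add_one
      fun m => dnode m (k / 2 ^ (n - m))
    exact ⟨m, Nat.lt_succ_iff.1 (Finset.mem_range.1 hm), hsup ▸ h⟩
  obtain ⟨hmn, hm⟩ := Nat.find_spec hex
  refine ⟨Nat.find hex, hmn, Nat.div_two_pow_sub_lt hk hmn, hm, fun j hj => ?_⟩
  rw [Nat.div_div_eq_div_mul, ← pow_add,
    show n - Nat.find hex + (Nat.find hex - j) = n - j by omega]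
  exact not_le.1 fun hle => Nat.find_min hex hj ⟨by omega, hle⟩

lemma setOf_le_diff_subset_biUnion_stoppingNodes {D : ℂ → β}
    (hD : ∀ n k : ℕ, k < 2 ^ n → ∀ z ∈ carlesonTop n k,
      D z = (Finset.range (n + 1)).sup (fun m => dnode m (k / 2 ^ (n - m)))) :
    {z | lam ≤ D z} \ {z | 1 ≤ ‖z‖} ⊆ ⋃ p ∈ stoppingNodes dnode lam, carlesonSq p.1 p.2 := by
  rintro z ⟨hDz, hz⟩
  obtain ⟨n, hzn⟩ := exists_mem_carlesonTop (not_le.1 hz)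
  have hk := angularIndex_lt_two_pow n z
  rw [mem_ofPred_eq, hD n _ hk z hzn] at hDz
  obtain ⟨m, hm, hmS⟩ := exists_ancestor_mem_stoppingNodes hk hDz
  exact mem_biUnion hmS (carlesonSq_subset_ancestor hm hzn.1)

end StoppingTime

lemma mul_measure_biUnion_le {ι α : Type*} [Countable ι] [MeasurableSpace α] {μ : Measure α}
    {c : ℝ≥0∞} {s : Set ι} {S T : ι → Set α} (hTS : ∀ i ∈ s, T i ⊆ S i)
    (hT : ∀ i ∈ s, MeasurableSet (T i)) (hS : s.PairwiseDisjoint S)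
    (hμ : ∀ i ∈ s, c * μ (S i) ≤ μ (T i)) :
    c * μ (⋃ i ∈ s, S i) ≤ μ (⋃ i ∈ s, T i) :=
  calc c * μ (⋃ i ∈ s, S i) ≤ c * ∑' i : s, μ (S i) := by
        gcongr; exact measure_biUnion_le μ s.to_countable S
    _ = ∑' i : s, c * μ (S i) := ENNReal.tsum_mul_left.symm
    _ ≤ ∑' i : s, μ (T i) := ENNReal.tsum_le_tsum fun i => hμ i i.2
    _ = μ (⋃ i ∈ s, T i) := (measure_biUnion s.to_countable (hS.mono_on hTS) hT).symm

theorem ancestral_max_distribution_bound_general (μ : Measure ℂ)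
    (hsupp : μ {z : ℂ | 1 ≤ ‖z‖} = 0)
    (τ : ℝ)
    (hμ : ∀ n k : ℕ, k < 2 ^ n →
      ENNReal.ofReal τ * μ (carlesonSq n k) ≤ μ (carlesonTop n k))
    (dnode : ℕ → ℕ → ℝ≥0) (d D : ℂ → ℝ≥0)
    (hd : ∀ n k : ℕ, k < 2 ^ n → ∀ z ∈ carlesonTop n k, d z = dnode n k)
    (hD : ∀ n k : ℕ, k < 2 ^ n → ∀ z ∈ carlesonTop n k,
      D z = (Finset.range (n + 1)).sup (fun m => dnode m (k / 2 ^ (n - m))))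
    (lam : ℝ≥0) :
    ENNReal.ofReal τ * μ {z : ℂ | lam ≤ D z} ≤ μ {z : ℂ | lam ≤ d z} := by
  set S := stoppingNodes dnode lam
  have hD_le : μ {z | lam ≤ D z} ≤ μ (⋃ p ∈ S, carlesonSq p.1 p.2) :=
    (measure_sdiff_null hsupp).symm.trans_le
      (measure_mono (setOf_le_diff_subset_biUnion_stoppingNodes hD))
  have htop_subset : ⋃ p ∈ S, carlesonTop p.1 p.2 ⊆ {z | lam ≤ d z} :=
    iUnion₂_subset fun p hp z hz => by rw [mem_ofPred_eq, hd p.1 p.2 hp.1 z hz]; exact hp.2.1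
  calc ENNReal.ofReal τ * μ {z | lam ≤ D z}
      ≤ ENNReal.ofReal τ * μ (⋃ p ∈ S, carlesonSq p.1 p.2) := by gcongr
    _ ≤ μ (⋃ p ∈ S, carlesonTop p.1 p.2) :=
        mul_measure_biUnion_le (fun _ _ => sep_subset _ _)
          (fun p hp => measurableSet_carlesonTop hp.1) pairwiseDisjoint_carlesonSq_stoppingNodes
          (fun p hp => hμ p.1 p.2 hp.1)
    _ ≤ μ {z | lam ≤ d z} := measure_mono htop_subset

/-- if every top half has `μ`-measure at least `τ` times the measure of its
square, `d` is constant on top halves, and `D` is the ancestral maximum of `d`, then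
`τ μ{D ≥ λ} ≤ μ{d ≥ λ}` for every `λ > 0`. -/
theorem ancestral_max_distribution_bound (μ : Measure ℂ) [IsFiniteMeasure μ]
    (hsupp : μ {z : ℂ | 1 ≤ ‖z‖} = 0)
    (τ : ℝ) (hτ : 0 < τ)
    (hμ : ∀ n k : ℕ, k < 2 ^ n →
      ENNReal.ofReal τ * μ (carlesonSq n k) ≤ μ (carlesonTop n k))
    (dnode : ℕ → ℕ → ℝ≥0) (d D : ℂ → ℝ≥0)
    (hd : ∀ n k : ℕ, k < 2 ^ n → ∀ z ∈ carlesonTop n k, d z = dnode n k)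
    (hD : ∀ n k : ℕ, k < 2 ^ n → ∀ z ∈ carlesonTop n k,
      D z = (Finset.range (n + 1)).sup (fun m => dnode m (k / 2 ^ (n - m))))
    (lam : ℝ≥0) (hlam : 0 < lam) :
    ENNReal.ofReal τ * μ {z : ℂ | lam ≤ D z} ≤ μ {z : ℂ | lam ≤ d z} :=
  ancestral_max_distribution_bound_general μ hsupp τ hμ dnode d D hd hD lam
end
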